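/- Let G be a graph, let X, Y ⊆ V(G), and let S be an important (X,Y)-separator. Then for every v ∈ S, the set S \ {v} is an important (X \ {v}, Y \ {v})-separator in the graph G − {v}. -/

import Mathlib

set_option maxHeartbeats 1000000

variable {V : Type}

/-- The graph obtained from `G` by deleting the vertex set `S`
(deleted vertices are kept as isolated vertices). -/
def gdelete (G : SimpleGraph V) (S : Set V) : SimpleGraph V where
  Adj u v := G.Adj u v ∧ u ∉ S ∧ v ∉ S
  symm := ⟨by intro u v h; exact ⟨h.1.symm, h.2.2, h.2.1⟩⟩
  loopless := ⟨by intro v h; exact G.irrefl h.1⟩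

/-- `R_G(X, S)`: the set of vertices reachable from `X \ S` in `G − S`. -/
def greach (G : SimpleGraph V) (X S : Set V) : Set V :=
  {v | v ∉ S ∧ ∃ x ∈ X \ S, (gdelete G S).Reachable x v}

/-- `S` is an `(X,Y)`-separator: no vertex of `Y` is reachable from `X \ S` in `G − S`. -/
def IsSep (G : SimpleGraph V) (X Y S : Set V) : Prop := Y ∩ greach G X S = ∅

/-- A minimal `(X,Y)`-separator: none of its proper subsets is an `(X,Y)`-separator. -/
def IsMinSep (G : SimpleGraph V) (X Y S : Set V) : Prop :=
  IsSep G X Y S ∧ ∀ S' ⊂ S, ¬ IsSep G X Y S'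

/-- `S'` dominates `S`: `|S'| ≤ |S|` and `R_G(X, S) ⊊ R_G(X, S')`. -/
def SepDominates (G : SimpleGraph V) (X S' S : Set V) : Prop :=
  S'.ncard ≤ S.ncard ∧ greach G X S ⊂ greach G X S'

/-- An important `(X,Y)`-separator: minimal and dominated by no `(X,Y)`-separator. -/
def IsImpSep (G : SimpleGraph V) (X Y S : Set V) : Prop :=
  IsMinSep G X Y S ∧ ¬ ∃ S', IsSep G X Y S' ∧ SepDominates G X S' S

/-!
Separating `G − T` by `S'` is the same as separating `G` by `T ∪ S'`: both leave the same set
of vertices reachable from `X`. For `T ⊆ S` this correspondence sends `S \ T` back to `S`,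
a smaller separator below `S \ T` to a smaller one below `S`, and a dominating separator `S'`
to the dominating separator `T ∪ S'`, whose size is at most `|T| + |S \ T| = |S|`.
-/

lemma gdelete_gdelete (G : SimpleGraph V) (T S : Set V) :
    gdelete (gdelete G T) S = gdelete G (T ∪ S) := by
  ext u w
  simp only [gdelete, Set.mem_union]
  tauto

lemma not_reachable_gdelete_of_mem (G : SimpleGraph V) {T : Set V} {x v : V}
    (hv : v ∈ T) (hxv : x ≠ v) : ¬ (gdelete G T).Reachable x v := by
  intro h
  obtain ⟨w⟩ := h.symm
  cases w with
  | nil => exact hxv rfl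
  | cons hadj _ => exact hadj.2.1 hv

lemma greach_gdelete (G : SimpleGraph V) (X T S : Set V) :
    greach (gdelete G T) (X \ T) S = greach G X (T ∪ S) := by
  ext w
  simp only [greach, Set.mem_ofPred_eq, gdelete_gdelete, Set.mem_sdiff, Set.mem_union]
  constructor
  · rintro ⟨hwS, x, ⟨⟨hxX, hxT⟩, hxS⟩, hxw⟩
    have hwT : w ∉ T := fun hwT =>
      not_reachable_gdelete_of_mem G (Or.inl hwT) (ne_of_mem_of_not_mem hwT hxT).symm hxw
    exact ⟨by tauto, x, ⟨hxX, by tauto⟩, hxw⟩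
  · rintro ⟨hw, x, ⟨hxX, hx⟩, hxw⟩
    exact ⟨fun h => hw (Or.inr h), x, ⟨⟨hxX, fun h => hx (Or.inl h)⟩, fun h => hx (Or.inr h)⟩,
      hxw⟩

lemma isSep_gdelete_iff (G : SimpleGraph V) (X Y T S : Set V) :
    IsSep (gdelete G T) (X \ T) (Y \ T) S ↔ IsSep G X Y (T ∪ S) := by
  have hdisj : Disjoint (Y ∩ greach G X (T ∪ S)) T :=
    Set.disjoint_left.2 fun _ hw hwT => hw.2.1 (Or.inl hwT)
  rw [IsSep, IsSep, greach_gdelete, ← Set.inter_sdiff_right_comm, sdiff_eq_left.2 hdisj]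

lemma union_ssubset_of_ssubset_sdiff {T S S' : Set V} (hTS : T ⊆ S) (hS' : S' ⊂ S \ T) :
    T ∪ S' ⊂ S := by
  refine ⟨Set.union_subset hTS (hS'.1.trans Set.sdiff_subset), fun hST => hS'.2 fun w hw => ?_⟩
  rcases hST hw.1 with hwT | hwS'
  · exact absurd hwT hw.2
  · exact hwS'

theorem IsImpSep.gdelete_sdiff {G : SimpleGraph V} {X Y S T : Set V}
    (hS : IsImpSep G X Y S) (hfin : S.Finite) (hTS : T ⊆ S) :
    IsImpSep (gdelete G T) (X \ T) (Y \ T) (S \ T) := by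
  have hS_eq : T ∪ (S \ T) = S := Set.union_sdiff_cancel hTS
  obtain ⟨⟨hsep, hmin⟩, hnodom⟩ := hS
  refine ⟨⟨?_, fun S' hS' hsep' => ?_⟩, ?_⟩
  · rwa [isSep_gdelete_iff, hS_eq]
  · exact hmin _ (union_ssubset_of_ssubset_sdiff hTS hS') ((isSep_gdelete_iff ..).1 hsep')
  · rintro ⟨S', hsep', hcard, hlt⟩
    refine hnodom ⟨T ∪ S', (isSep_gdelete_iff ..).1 hsep', ?_, ?_⟩
    · calc (T ∪ S').ncard ≤ T.ncard + S'.ncard := Set.ncard_union_le _ _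
        _ ≤ T.ncard + (S \ T).ncard := by omega
        _ = S.ncard := by rw [add_comm, Set.ncard_sdiff_add_ncard_of_subset hTS hfin]
    · rwa [greach_gdelete, greach_gdelete, hS_eq] at hlt

/-- if `S` is an important `(X,Y)`-separator then for every `v ∈ S` the
set `S \ {v}` is an important `(X \ {v}, Y \ {v})`-separator in `G − {v}`. -/
theorem stmt8 [Fintype V] (G : SimpleGraph V) (X Y S : Set V)
    (hS : IsImpSep G X Y S) :
    ∀ v ∈ S, IsImpSep (gdelete G {v}) (X \ {v}) (Y \ {v}) (S \ {v}) :=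
  fun _ hv => hS.gdelete_sdiff S.toFinite (Set.singleton_subset_iff.2 hv)
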